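/- arXiv:1604.01434 — 2 statements merged into one kernel-verified Lean document; each statement's English description precedes it below -/
import Mathlib

section
/- Entropy-rate bounds on the compound inf-information rate: in the compound joint-distribution setting, assuming all the compound quantities appearing are finite, the following hold: (i) cinf I(X;Y) ≤ csup H(Y) − csup H(Y|X); (ii) cinf I(X;Y) ≤ cinf H(Y) − cinf H(Y|X); (iii) cinf I(X;Y) ≥ cinf H(Y) − csup H(Y|X); (iv) csup H(Y) ≥ csup H(Y|X); (v) csup H(Y) ≥ cinf H(Y) ≥ cinf H(Y|X); moreover csup I(X;Y) ≥ cinf I(X;Y) ≥ 0. -/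
open Filter
open scoped ENNReal

noncomputable section

/-- Generic compound infimum set: rates `R` with `sup_s P_{Z∼P_{n,s}}(f_{n,s}(Z) ≤ R) → 0`. -/
def cinfSet {S : Type*} {T : ℕ → Type*} [∀ n, Fintype (T n)]
    (P : ∀ n, S → PMF (T n)) (f : ∀ n, S → T n → ℝ) : Set ℝ :=
  {R : ℝ | Tendsto (fun n => ⨆ s : S,
      ∑ z : T n, {z' : T n | f n s z' ≤ R}.indicator (fun z' => P n s z') z)
    atTop (nhds 0)}

/-- Generic compound infimum. -/
def cinf {S : Type*} {T : ℕ → Type*} [∀ n, Fintype (T n)]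
    (P : ∀ n, S → PMF (T n)) (f : ∀ n, S → T n → ℝ) : ℝ := sSup (cinfSet P f)

/-- Generic compound supremum set: rates `R` with `sup_s P_{Z∼P_{n,s}}(f_{n,s}(Z) ≥ R) → 0`. -/
def csupSet {S : Type*} {T : ℕ → Type*} [∀ n, Fintype (T n)]
    (P : ∀ n, S → PMF (T n)) (f : ∀ n, S → T n → ℝ) : Set ℝ :=
  {R : ℝ | Tendsto (fun n => ⨆ s : S,
      ∑ z : T n, {z' : T n | R ≤ f n s z'}.indicator (fun z' => P n s z') z)
    atTop (nhds 0)}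

/-- Generic compound supremum. -/
def csup {S : Type*} {T : ℕ → Type*} [∀ n, Fintype (T n)]
    (P : ∀ n, S → PMF (T n)) (f : ∀ n, S → T n → ℝ) : ℝ := sInf (csupSet P f)

/-- First marginal of a joint PMF on `A n × B n`. -/
def margX {S : Type*} {A B : ℕ → Type*} [∀ n, Fintype (B n)]
    (P : ∀ n, S → PMF (A n × B n)) (n : ℕ) (s : S) (x : A n) : ℝ≥0∞ :=
  ∑ y : B n, P n s (x, y)

/-- Second marginal of a joint PMF on `A n × B n`. -/
def margY {S : Type*} {A B : ℕ → Type*} [∀ n, Fintype (A n)]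
    (P : ∀ n, S → PMF (A n × B n)) (n : ℕ) (s : S) (y : B n) : ℝ≥0∞ :=
  ∑ x : A n, P n s (x, y)

/-- Information density rate `i_{n,s}(x,y) = (1/n)·ln(P(x,y)/(p(x)·q(y)))`. -/
def iDens {S : Type*} {A B : ℕ → Type*} [∀ n, Fintype (A n)] [∀ n, Fintype (B n)]
    (P : ∀ n, S → PMF (A n × B n)) (n : ℕ) (s : S) (z : A n × B n) : ℝ :=
  (1 / (n : ℝ)) * Real.log ((P n s z).toReal /
    ((margX P n s z.1).toReal * (margY P n s z.2).toReal))

/-- Output entropy density rate `h_{n,s}(Y) = −(1/n)·ln q(y)`. -/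
def hYDens {S : Type*} {A B : ℕ → Type*} [∀ n, Fintype (A n)]
    (P : ∀ n, S → PMF (A n × B n)) (n : ℕ) (s : S) (z : A n × B n) : ℝ :=
  -((1 / (n : ℝ)) * Real.log (margY P n s z.2).toReal)

/-- Conditional entropy density rate `h_{n,s}(Y|X) = −(1/n)·ln(P(x,y)/p(x))`. -/
def hYXDens {S : Type*} {A B : ℕ → Type*} [∀ n, Fintype (B n)]
    (P : ∀ n, S → PMF (A n × B n)) (n : ℕ) (s : S) (z : A n × B n) : ℝ :=
  -((1 / (n : ℝ)) * Real.log ((P n s z).toReal / (margX P n s z.1).toReal))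
/-! On the support of `P` the three densities satisfy `h(Y) = i(X;Y) + h(Y|X)`, so every
inequality between compound rates is a union bound: for instance `{h(Y) ≤ R₁ + R₂}` is
covered by `{i ≤ R₁} ∪ {h(Y|X) ≤ R₂}` up to a null set. Nonnegativity of the compound
inf-information rate comes from `P(i ≤ R) ≤ e^{nR} ∑ p(x) q(y) = e^{nR}`, which vanishes
for `R < 0`. -/

open Set
open scoped Topology

lemma PMF.sum_coe_eq_one {T : Type*} [Fintype T] (p : PMF T) : ∑ z, p z = 1 := by
  simpa [PMF.toOuterMeasure_apply_fintype] using
    (p.toOuterMeasure_apply_eq_one_iff univ).2 (subset_univ _)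

lemma tendsto_iSup_toOuterMeasure_of_subset_union {S : Type*} {T : ℕ → Type*}
    {P : ∀ n, S → PMF (T n)} {E F G : ∀ n, S → Set (T n)}
    (hEFG : ∀ n s, E n s ∩ (P n s).support ⊆ F n s ∪ G n s)
    (hF : Tendsto (fun n => ⨆ s, (P n s).toOuterMeasure (F n s)) atTop (𝓝 0))
    (hG : Tendsto (fun n => ⨆ s, (P n s).toOuterMeasure (G n s)) atTop (𝓝 0)) :
    Tendsto (fun n => ⨆ s, (P n s).toOuterMeasure (E n s)) atTop (𝓝 0) := by
  refine tendsto_of_tendsto_of_tendsto_of_le_of_le tendsto_const_nhds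
    (by simpa only [add_zero] using hF.add hG) (fun _ => zero_le) fun n => iSup_le fun s => ?_
  calc (P n s).toOuterMeasure (E n s)
      ≤ (P n s).toOuterMeasure (F n s ∪ G n s) := PMF.toOuterMeasure_mono _ (hEFG n s)
    _ ≤ (P n s).toOuterMeasure (F n s) + (P n s).toOuterMeasure (G n s) :=
      MeasureTheory.measure_union_le _ _
    _ ≤ _ := add_le_add (le_iSup (fun s => (P n s).toOuterMeasure (F n s)) s)
      (le_iSup (fun s => (P n s).toOuterMeasure (G n s)) s)

def EqAddOnSupport {S : Type*} {T : ℕ → Type*} (P : ∀ n, S → PMF (T n))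
    (g u v : ∀ n, S → T n → ℝ) : Prop :=
  ∀ n s z, P n s z ≠ 0 → g n s z = u n s z + v n s z

section Compound

variable {S : Type*} {T : ℕ → Type*} [∀ n, Fintype (T n)] {P : ∀ n, S → PMF (T n)}

lemma mem_cinfSet_iff {f : ∀ n, S → T n → ℝ} {R : ℝ} :
    R ∈ cinfSet P f ↔
      Tendsto (fun n => ⨆ s, (P n s).toOuterMeasure {z | f n s z ≤ R}) atTop (𝓝 0) := by
  simp only [PMF.toOuterMeasure_apply_fintype]
  rfl

lemma mem_csupSet_iff {f : ∀ n, S → T n → ℝ} {R : ℝ} :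
    R ∈ csupSet P f ↔
      Tendsto (fun n => ⨆ s, (P n s).toOuterMeasure {z | R ≤ f n s z}) atTop (𝓝 0) := by
  simp only [PMF.toOuterMeasure_apply_fintype]
  rfl

lemma le_of_mem_cinfSet_of_mem_csupSet [Nonempty S] {f : ∀ n, S → T n → ℝ} {R₁ R₂ : ℝ}
    (h₁ : R₁ ∈ cinfSet P f) (h₂ : R₂ ∈ csupSet P f) : R₁ ≤ R₂ := by
  by_contra! hlt
  rw [mem_cinfSet_iff] at h₁
  rw [mem_csupSet_iff] at h₂
  have hmass : Tendsto (fun n => ⨆ s, (P n s).toOuterMeasure univ) atTop (𝓝 0) :=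
    tendsto_iSup_toOuterMeasure_of_subset_union
      (fun n s z _ => (le_total (f n s z) R₁).imp id hlt.le.trans) h₁ h₂
  simp only [(PMF.toOuterMeasure_apply_eq_one_iff _ _).2 (subset_univ _), iSup_const] at hmass
  exact one_ne_zero (tendsto_nhds_unique tendsto_const_nhds hmass)

lemma cinf_le_csup [Nonempty S] {f : ∀ n, S → T n → ℝ} (h₁ : (cinfSet P f).Nonempty)
    (h₂ : (csupSet P f).Nonempty) : cinf P f ≤ csup P f :=
  csSup_le h₁ fun _ hR₁ => le_csInf h₂ fun _ hR₂ =>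
    le_of_mem_cinfSet_of_mem_csupSet hR₁ hR₂

section Decomposition

variable {u v g : ∀ n, S → T n → ℝ}

lemma add_mem_cinfSet (hg : EqAddOnSupport P g u v)
    {R₁ R₂ : ℝ} (h₁ : R₁ ∈ cinfSet P u) (h₂ : R₂ ∈ cinfSet P v) :
    R₁ + R₂ ∈ cinfSet P g := by
  rw [mem_cinfSet_iff] at h₁ h₂ ⊢
  refine tendsto_iSup_toOuterMeasure_of_subset_union (fun n s z ⟨hz, hP⟩ => ?_) h₁ h₂
  have hz : g n s z ≤ R₁ + R₂ := hz
  have := hg n s z hP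
  simp only [mem_union, mem_ofPred_eq]
  by_contra! h
  linarith [h.1, h.2]

lemma sub_mem_cinfSet (hg : EqAddOnSupport P g u v)
    {R R₂ : ℝ} (h : R ∈ cinfSet P g) (h₂ : R₂ ∈ csupSet P v) :
    R - R₂ ∈ cinfSet P u := by
  rw [mem_cinfSet_iff] at h ⊢
  rw [mem_csupSet_iff] at h₂
  refine tendsto_iSup_toOuterMeasure_of_subset_union (fun n s z ⟨hz, hP⟩ => ?_) h h₂
  have hz : u n s z ≤ R - R₂ := hz
  have := hg n s z hP
  simp only [mem_union, mem_ofPred_eq]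
  by_contra! h
  linarith [h.1, h.2]

lemma sub_mem_csupSet (hg : EqAddOnSupport P g u v)
    {R R₁ : ℝ} (h : R ∈ csupSet P g) (h₁ : R₁ ∈ cinfSet P u) :
    R - R₁ ∈ csupSet P v := by
  rw [mem_csupSet_iff] at h ⊢
  rw [mem_cinfSet_iff] at h₁
  refine tendsto_iSup_toOuterMeasure_of_subset_union (fun n s z ⟨hz, hP⟩ => ?_) h h₁
  have hz : R - R₁ ≤ v n s z := hz
  have := hg n s z hP
  simp only [mem_union, mem_ofPred_eq]
  by_contra! h
  linarith [h.1, h.2]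

lemma cinf_add_cinf_le_cinf (hg : EqAddOnSupport P g u v)
    (hu : (cinfSet P u).Nonempty) (hv : (cinfSet P v).Nonempty) (hbdd : BddAbove (cinfSet P g)) :
    cinf P u + cinf P v ≤ cinf P g := by
  suffices cinf P u ≤ cinf P g - cinf P v by linarith
  refine csSup_le hu fun R₁ hR₁ => ?_
  suffices cinf P v ≤ cinf P g - R₁ by linarith
  refine csSup_le hv fun R₂ hR₂ => ?_
  have : R₁ + R₂ ≤ cinf P g := le_csSup hbdd (add_mem_cinfSet hg hR₁ hR₂)
  linarith

lemma cinf_le_cinf_add_csup (hg : EqAddOnSupport P g u v)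
    (hg' : (cinfSet P g).Nonempty) (hv : (csupSet P v).Nonempty) (hbdd : BddAbove (cinfSet P u)) :
    cinf P g ≤ cinf P u + csup P v := by
  refine csSup_le hg' fun R hR => ?_
  suffices R - cinf P u ≤ csup P v by linarith
  refine le_csInf hv fun R₂ hR₂ => ?_
  have : R - R₂ ≤ cinf P u := le_csSup hbdd (sub_mem_cinfSet hg hR hR₂)
  linarith

lemma cinf_add_csup_le_csup (hg : EqAddOnSupport P g u v)
    (hu : (cinfSet P u).Nonempty) (hg' : (csupSet P g).Nonempty) (hbdd : BddBelow (csupSet P v)) :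
    cinf P u + csup P v ≤ csup P g := by
  suffices cinf P u ≤ csup P g - csup P v by linarith
  refine csSup_le hu fun R₁ hR₁ => ?_
  suffices csup P v + R₁ ≤ csup P g by linarith
  refine le_csInf hg' fun R hR => ?_
  have : csup P v ≤ R - R₁ := csInf_le hbdd (sub_mem_csupSet hg hR hR₁)
  linarith

end Decomposition

end Compound

lemma apply_le_margX {S : Type*} {A B : ℕ → Type*} [∀ n, Fintype (B n)]
    (P : ∀ n, S → PMF (A n × B n)) {n : ℕ} {s : S} (z : A n × B n) :
    P n s z ≤ margX P n s z.1 :=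
  Finset.single_le_sum (f := fun y => P n s (z.1, y)) (fun _ _ => zero_le) (Finset.mem_univ z.2)

lemma apply_le_margY {S : Type*} {A B : ℕ → Type*} [∀ n, Fintype (A n)]
    (P : ∀ n, S → PMF (A n × B n)) {n : ℕ} {s : S} (z : A n × B n) :
    P n s z ≤ margY P n s z.2 :=
  Finset.single_le_sum (f := fun x => P n s (x, z.2)) (fun _ _ => zero_le) (Finset.mem_univ z.1)

section Joint

variable {S : Type*} {A B : ℕ → Type*} [∀ n, Fintype (A n)] [∀ n, Fintype (B n)]
  (P : ∀ n, S → PMF (A n × B n)) {n : ℕ} {s : S}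

lemma sum_margX : ∑ x, margX P n s x = 1 := by
  simp only [margX]
  rw [← (P n s).sum_coe_eq_one, Fintype.sum_prod_type]

lemma sum_margY : ∑ y, margY P n s y = 1 := by
  simp only [margY]
  rw [← (P n s).sum_coe_eq_one, Fintype.sum_prod_type_right]

lemma margX_ne_top (x : A n) : margX P n s x ≠ ⊤ :=
  ne_top_of_le_ne_top ENNReal.one_ne_top <| sum_margX P ▸
    Finset.single_le_sum (fun _ _ => zero_le) (Finset.mem_univ x)

lemma margY_ne_top (y : B n) : margY P n s y ≠ ⊤ :=
  ne_top_of_le_ne_top ENNReal.one_ne_top <| sum_margY P ▸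
    Finset.single_le_sum (fun _ _ => zero_le) (Finset.mem_univ y)

lemma toReal_margX_pos {z : A n × B n} (h : P n s z ≠ 0) : 0 < (margX P n s z.1).toReal :=
  ENNReal.toReal_pos (ne_bot_of_le_ne_bot h (apply_le_margX P z)) (margX_ne_top P _)

lemma toReal_margY_pos {z : A n × B n} (h : P n s z ≠ 0) : 0 < (margY P n s z.2).toReal :=
  ENNReal.toReal_pos (ne_bot_of_le_ne_bot h (apply_le_margY P z)) (margY_ne_top P _)

lemma eqAddOnSupport_hYDens_iDens_hYXDens :
    EqAddOnSupport P (hYDens P) (iDens P) (hYXDens P) := by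
  intro n s z h
  have hP := ENNReal.toReal_pos h ((P n s).apply_ne_top z)
  have hX := toReal_margX_pos P h
  have hY := toReal_margY_pos P h
  simp only [hYDens, iDens, hYXDens]
  rw [Real.log_div hP.ne' (by positivity), Real.log_mul hX.ne' hY.ne', Real.log_div hP.ne' hX.ne']
  ring

lemma apply_le_exp_mul_margX_mul_margY (hn : 0 < n) {z : A n × B n} {R : ℝ} (h : P n s z ≠ 0)
    (hz : iDens P n s z ≤ R) :
    P n s z ≤ ENNReal.ofReal (Real.exp (n * R)) * (margX P n s z.1 * margY P n s z.2) := by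
  have hP := ENNReal.toReal_pos h ((P n s).apply_ne_top z)
  have hX := toReal_margX_pos P h
  have hY := toReal_margY_pos P h
  have hlog : Real.log ((P n s z).toReal / ((margX P n s z.1).toReal * (margY P n s z.2).toReal))
      ≤ n * R := by
    rw [iDens, one_div_mul_eq_div] at hz
    exact (div_le_iff₀' (by exact_mod_cast hn)).1 hz
  have hreal : (P n s z).toReal ≤
      Real.exp (n * R) * ((margX P n s z.1).toReal * (margY P n s z.2).toReal) :=
    (div_le_iff₀ (by positivity)).1 ((Real.log_le_iff_le_exp (by positivity)).1 hlog)
  calc P n s z = ENNReal.ofReal (P n s z).toReal :=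
        (ENNReal.ofReal_toReal ((P n s).apply_ne_top z)).symm
    _ ≤ ENNReal.ofReal (Real.exp (n * R) *
        ((margX P n s z.1).toReal * (margY P n s z.2).toReal)) := ENNReal.ofReal_le_ofReal hreal
    _ = _ := by
      rw [ENNReal.ofReal_mul (Real.exp_pos _).le, ENNReal.ofReal_mul hX.le,
        ENNReal.ofReal_toReal (margX_ne_top P _), ENNReal.ofReal_toReal (margY_ne_top P _)]

lemma toOuterMeasure_iDens_le_le_exp (hn : 0 < n) (R : ℝ) :
    (P n s).toOuterMeasure {z | iDens P n s z ≤ R} ≤ ENNReal.ofReal (Real.exp (n * R)) := by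
  rw [PMF.toOuterMeasure_apply_fintype]
  calc ∑ z, {z | iDens P n s z ≤ R}.indicator (P n s) z
      ≤ ∑ z : A n × B n,
          ENNReal.ofReal (Real.exp (n * R)) * (margX P n s z.1 * margY P n s z.2) :=
        Finset.sum_le_sum fun z _ => indicator_apply_le' (fun hz => ?_) fun _ => zero_le
    _ = ENNReal.ofReal (Real.exp (n * R)) := by
      rw [← Finset.mul_sum, Fintype.sum_prod_type, ← Fintype.sum_mul_sum, sum_margX, sum_margY,
        mul_one, mul_one]
  by_cases h : P n s z = 0
  · exact h ▸ zero_le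
  · exact apply_le_exp_mul_margX_mul_margY P hn h hz

lemma mem_cinfSet_iDens_of_neg {R : ℝ} (hR : R < 0) : R ∈ cinfSet P (iDens P) := by
  have hexp : Tendsto (fun n : ℕ => ENNReal.ofReal (Real.exp (n * R))) atTop (𝓝 0) := by
    simpa using ENNReal.tendsto_ofReal
      (Real.tendsto_exp_atBot.comp (tendsto_natCast_atTop_atTop.atTop_mul_const_of_neg hR))
  rw [mem_cinfSet_iff]
  refine tendsto_of_tendsto_of_tendsto_of_le_of_le' tendsto_const_nhds hexp
    (Eventually.of_forall fun _ => zero_le) ?_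
  filter_upwards [eventually_gt_atTop 0] with n hn
  exact iSup_le fun s => toOuterMeasure_iDens_le_le_exp P hn R

lemma zero_le_cinf_iDens (h : BddAbove (cinfSet P (iDens P))) : 0 ≤ cinf P (iDens P) :=
  le_of_forall_lt_imp_le_of_dense fun _ hR => le_csSup h (mem_cinfSet_iDens_of_neg P hR)

end Joint

theorem compound_inf_information_entropy_bounds_general {S : Type*} [Nonempty S]
    {A B : ℕ → Type*} [∀ n, Fintype (A n)] [∀ n, Fintype (B n)]
    (P : ∀ n, S → PMF (A n × B n))
    (hi₁ : (cinfSet P (iDens P)).Nonempty) (hi₂ : BddAbove (cinfSet P (iDens P)))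
    (hi₃ : (csupSet P (iDens P)).Nonempty)
    (hy₁ : (cinfSet P (hYDens P)).Nonempty) (hy₂ : BddAbove (cinfSet P (hYDens P)))
    (hy₃ : (csupSet P (hYDens P)).Nonempty)
    (hc₁ : (cinfSet P (hYXDens P)).Nonempty)
    (hc₃ : (csupSet P (hYXDens P)).Nonempty) (hc₄ : BddBelow (csupSet P (hYXDens P))) :
    cinf P (iDens P) ≤ csup P (hYDens P) - csup P (hYXDens P) ∧
    cinf P (iDens P) ≤ cinf P (hYDens P) - cinf P (hYXDens P) ∧
    cinf P (hYDens P) - csup P (hYXDens P) ≤ cinf P (iDens P) ∧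
    csup P (hYXDens P) ≤ csup P (hYDens P) ∧
    (cinf P (hYDens P) ≤ csup P (hYDens P) ∧
      cinf P (hYXDens P) ≤ cinf P (hYDens P)) ∧
    (cinf P (iDens P) ≤ csup P (iDens P) ∧ 0 ≤ cinf P (iDens P)) := by
  have hdecomp := eqAddOnSupport_hYDens_iDens_hYXDens P
  have hcsup := cinf_add_csup_le_csup hdecomp hi₁ hy₃ hc₄
  have hcinf := cinf_add_cinf_le_cinf hdecomp hi₁ hc₁ hy₂
  have hmixed := cinf_le_cinf_add_csup hdecomp hy₁ hc₃ hi₂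
  have hI := cinf_le_csup hi₁ hi₃
  have hY := cinf_le_csup hy₁ hy₃
  have hI₀ := zero_le_cinf_iDens P hi₂
  exact ⟨by linarith, by linarith, by linarith, by linarith, ⟨hY, by linarith⟩, hI, hI₀⟩

/-- entropy-rate bounds on the compound inf-information rate, assuming all
the compound quantities appearing are finite:
(i) `cinf I(X;Y) ≤ csup H(Y) − csup H(Y|X)`; (ii) `cinf I(X;Y) ≤ cinf H(Y) − cinf H(Y|X)`;
(iii) `cinf I(X;Y) ≥ cinf H(Y) − csup H(Y|X)`; (iv) `csup H(Y) ≥ csup H(Y|X)`;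
(v) `csup H(Y) ≥ cinf H(Y) ≥ cinf H(Y|X)`; moreover `csup I(X;Y) ≥ cinf I(X;Y) ≥ 0`. -/
theorem compound_inf_information_entropy_bounds {S : Type*} [Nonempty S]
    {A B : ℕ → Type*} [∀ n, Fintype (A n)] [∀ n, Nonempty (A n)]
    [∀ n, Fintype (B n)] [∀ n, Nonempty (B n)]
    (P : ∀ n, S → PMF (A n × B n))
    (hi₁ : (cinfSet P (iDens P)).Nonempty) (hi₂ : BddAbove (cinfSet P (iDens P)))
    (hi₃ : (csupSet P (iDens P)).Nonempty) (hi₄ : BddBelow (csupSet P (iDens P)))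
    (hy₁ : (cinfSet P (hYDens P)).Nonempty) (hy₂ : BddAbove (cinfSet P (hYDens P)))
    (hy₃ : (csupSet P (hYDens P)).Nonempty) (hy₄ : BddBelow (csupSet P (hYDens P)))
    (hc₁ : (cinfSet P (hYXDens P)).Nonempty) (hc₂ : BddAbove (cinfSet P (hYXDens P)))
    (hc₃ : (csupSet P (hYXDens P)).Nonempty) (hc₄ : BddBelow (csupSet P (hYXDens P))) :
    cinf P (iDens P) ≤ csup P (hYDens P) - csup P (hYXDens P) ∧
    cinf P (iDens P) ≤ cinf P (hYDens P) - cinf P (hYXDens P) ∧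
    cinf P (hYDens P) - csup P (hYXDens P) ≤ cinf P (iDens P) ∧
    csup P (hYXDens P) ≤ csup P (hYDens P) ∧
    (cinf P (hYDens P) ≤ csup P (hYDens P) ∧
      cinf P (hYXDens P) ≤ cinf P (hYDens P)) ∧
    (cinf P (iDens P) ≤ csup P (iDens P) ∧ 0 ≤ cinf P (iDens P)) :=
  compound_inf_information_entropy_bounds_general P hi₁ hi₂ hi₃ hy₁ hy₂ hy₃ hc₁ hc₃ hc₄

end
end

section
/- Sufficient condition for the compound inf-information rate to equal the worst-case mutual information rate: in the general compound channel setting, suppose the input alphabets have per-symbol structure A_n = 𝒳ⁿ for a fixed nonempty finite set 𝒳, suppose cinf I(X;Y) is finite, and suppose that for every δ > 0, liminf_{n→∞} inf_{s∈S} P( |Z_{n,s} − cinf I(X;Y)| > δ ) = 0. Then cinf I(X;Y) = liminf_{n→∞} inf_{s∈S} (1/n)·I(X^n;Y^n|s). -/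
open Filter
open scoped ENNReal

noncomputable section

variable {S : Type*} {A B : ℕ → Type*}

/-- Output distribution `q_{n,s}(y) = Σ_x p_n(x)·W_{n,s}(x)(y)`. -/
def outDist [∀ n, Fintype (A n)] (p : ∀ n, PMF (A n)) (W : ∀ n, S → A n → PMF (B n))
    (n : ℕ) (s : S) (y : B n) : ℝ≥0∞ :=
  ∑ x : A n, p n x * W n s x y

/-- Information density rate `Z_{n,s}(x,y) = (1/n)·ln(W_{n,s}(x)(y)/q_{n,s}(y))`. -/
def infoDensRate [∀ n, Fintype (A n)] (p : ∀ n, PMF (A n)) (W : ∀ n, S → A n → PMF (B n))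
    (n : ℕ) (s : S) (z : A n × B n) : ℝ :=
  (1 / (n : ℝ)) * Real.log ((W n s z.1 z.2).toReal / (outDist p W n s z.2).toReal)

/-- Probability of an event for the pair `(Xⁿ,Yⁿ) ∼ p_n ⊗ W_{n,s}`. -/
def probEvent [∀ n, Fintype (A n)] [∀ n, Fintype (B n)]
    (p : ∀ n, PMF (A n)) (W : ∀ n, S → A n → PMF (B n)) (n : ℕ) (s : S)
    (E : Set (A n × B n)) : ℝ≥0∞ :=
  ∑ z : A n × B n, E.indicator (fun z' => p n z'.1 * W n s z'.1 z'.2) z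

/-- The set whose supremum is the compound inf-information rate. -/
def cinfISet [∀ n, Fintype (A n)] [∀ n, Fintype (B n)]
    (p : ∀ n, PMF (A n)) (W : ∀ n, S → A n → PMF (B n)) : Set ℝ :=
  {R : ℝ | Tendsto (fun n => ⨆ s : S,
      probEvent p W n s {z | infoDensRate p W n s z ≤ R}) atTop (nhds 0)}

/-- The compound inf-information rate `cinf I(X;Y)`. -/
def cinfI [∀ n, Fintype (A n)] [∀ n, Fintype (B n)]
    (p : ∀ n, PMF (A n)) (W : ∀ n, S → A n → PMF (B n)) : ℝ := sSup (cinfISet p W)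

/-- Mutual information `I(Xⁿ;Yⁿ|s)`. -/
def mutualInfo [∀ n, Fintype (A n)] [∀ n, Fintype (B n)]
    (p : ∀ n, PMF (A n)) (W : ∀ n, S → A n → PMF (B n)) (n : ℕ) (s : S) : ℝ :=
  ∑ x : A n, ∑ y : B n, (p n x * W n s x y).toReal *
    Real.log ((W n s x y).toReal / (outDist p W n s y).toReal)

/-!
Under state `s` the rate `(1/n)·I(Xⁿ;Yⁿ|s)` is the expectation of `Z = Z_{n,s}` under the joint
law `jointProb`.

Lower bound: splitting `E[Z]` at a level `R` gives `E[Z] ≥ R - |R|·P(Z ≤ R) - 1/n`, because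
`t log t ≥ t - 1` bounds the expected negative part of `Z` by `1/n`. For `R < cinf I` the
probability tends to zero uniformly in `s`.

Upper bound: off the event `|Z - c| > δ` we have `Z ≤ c + δ`; on it `Z ≤ -(1/n) log p(Xⁿ)` since
`W ≤ q / p`, and by concavity of `-t log t` the self-information collected on an event of
probability `P` is at most `P·n·log |𝒳| + 1`. Hence
`E[Z] ≤ c + δ + (|c + δ| + log |𝒳|)·P(|Z - c| > δ) + 1/n`, and the hypothesis provides infinitely
many `n` with a state that makes this probability small.
-/

open Real Finset Topology

lemma PMF.sum_coe_eq_one_s15 {α : Type*} [Fintype α] (q : PMF α) : ∑ a, q a = 1 := by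
  rw [← tsum_fintype (L := SummationFilter.unconditional _)]
  exact q.tsum_coe

lemma PMF.sum_toReal_eq_one {α : Type*} [Fintype α] (q : PMF α) : ∑ a, (q a).toReal = 1 := by
  rw [← ENNReal.toReal_sum fun a _ => q.apply_ne_top a, q.sum_coe_eq_one_s15, ENNReal.toReal_one]

lemma neg_le_mul_min_log_div_zero {w q : ℝ} (hw : 0 ≤ w) (hq : 0 ≤ q) :
    -q ≤ w * min (log (w / q)) 0 := by
  rcases hw.eq_or_lt with rfl | hw
  · simpa using hq
  rcases hq.eq_or_lt with rfl | hq
  · simp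
  rw [mul_min_of_nonneg _ _ hw.le, mul_zero, le_min_iff]
  refine ⟨?_, by linarith⟩
  have hlog := one_sub_inv_le_log_of_pos (div_pos hw hq)
  rw [inv_div] at hlog
  have h : w * (1 - q / w) = w - q := by field_simp
  nlinarith [mul_le_mul_of_nonneg_left hlog hw.le]

lemma mul_log_div_le_mul_neg_log {u w q : ℝ} (hu : 0 ≤ u) (hw : 0 ≤ w) (huwq : u * w ≤ q) :
    u * w * log (w / q) ≤ u * w * -log u := by
  rcases hu.eq_or_lt with rfl | hu
  · simp
  rcases hw.eq_or_lt with rfl | hw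
  · simp
  have hq : 0 < q := (mul_pos hu hw).trans_le huwq
  rw [← log_inv]
  refine mul_le_mul_of_nonneg_left (log_le_log (div_pos hw hq) ?_) (mul_pos hu hw).le
  rw [div_le_iff₀ hq]
  calc w = u⁻¹ * (u * w) := by field_simp
    _ ≤ u⁻¹ * q := by gcongr

lemma sum_mul_neg_log_le {α : Type*} [Fintype α] {r u : α → ℝ} (hr : ∀ a, 0 ≤ r a)
    (hru : ∀ a, r a ≤ u a) :
    ∑ a, r a * -log (u a) ≤ negMulLog (∑ a, r a) + (∑ a, r a) * log (Fintype.card α) := by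
  rcases isEmpty_or_nonempty α with hα | hα
  · simp
  have hcard : (0 : ℝ) < Fintype.card α := by exact_mod_cast Fintype.card_pos
  have hpt (a : α) : r a * -log (u a) ≤ negMulLog (r a) := by
    rcases (hr a).eq_or_lt with h | h
    · simp [← h]
    rw [negMulLog, neg_mul, mul_neg]
    exact neg_le_neg (mul_le_mul_of_nonneg_left (log_le_log h (hru a)) h.le)
  have hjensen := concaveOn_negMulLog.le_map_sum (t := univ)
    (w := fun _ => (Fintype.card α : ℝ)⁻¹) (p := r) (fun _ _ => by positivity)
    (by simp [card_univ, hcard.ne']) (fun a _ => hr a)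
  simp only [smul_eq_mul, ← mul_sum] at hjensen
  calc ∑ a, r a * -log (u a) ≤ ∑ a, negMulLog (r a) := sum_le_sum fun a _ => hpt a
    _ = Fintype.card α * ((Fintype.card α : ℝ)⁻¹ * ∑ a, negMulLog (r a)) := by field_simp
    _ ≤ Fintype.card α * negMulLog ((Fintype.card α : ℝ)⁻¹ * ∑ a, r a) := by gcongr
    _ = negMulLog (∑ a, r a) + (∑ a, r a) * log (Fintype.card α) := by
      rw [negMulLog_mul, negMulLog, log_inv]; field_simp; ring

section WeightedSums

variable {ι : Type*} [Fintype ι] {w f : ι → ℝ}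

lemma sub_abs_mul_add_sum_mul_min_le (hw : ∀ i, 0 ≤ w i) (hw1 : ∑ i, w i = 1) (R : ℝ) :
    R - |R| * ∑ i with f i ≤ R, w i + ∑ i, w i * min (f i) 0 ≤ ∑ i, w i * f i := by
  have hcompl : ∑ i with ¬f i ≤ R, w i = 1 - ∑ i with f i ≤ R, w i := by
    rw [← hw1, ← sum_filter_add_sum_filter_not univ (fun i => f i ≤ R) w, add_sub_cancel_left]
  have hneg : ∑ i with ¬f i ≤ R, w i * min (f i) 0 ≤ 0 :=
    sum_nonpos fun i _ => mul_nonpos_of_nonneg_of_nonpos (hw i) (min_le_right _ _)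
  have hlow : ∑ i with f i ≤ R, w i * min (f i) 0 ≤ ∑ i with f i ≤ R, w i * f i :=
    sum_le_sum fun i _ => mul_le_mul_of_nonneg_left (min_le_left _ _) (hw i)
  have hhigh : R * ∑ i with ¬f i ≤ R, w i ≤ ∑ i with ¬f i ≤ R, w i * f i := by
    rw [mul_sum]
    refine sum_le_sum fun i hi => ?_
    rw [mul_comm]
    exact mul_le_mul_of_nonneg_left (not_le.mp (mem_filter.mp hi).2).le (hw i)
  rw [hcompl, mul_sub, mul_one] at hhigh
  have habs := mul_le_mul_of_nonneg_right (le_abs_self R)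
    (sum_nonneg fun i _ => hw i : 0 ≤ ∑ i with f i ≤ R, w i)
  rw [← sum_filter_add_sum_filter_not univ (fun i => f i ≤ R) (fun i => w i * f i),
    ← sum_filter_add_sum_filter_not univ (fun i => f i ≤ R) (fun i => w i * min (f i) 0)]
  linarith

lemma sum_mul_le_add_abs_mul_add (hw : ∀ i, 0 ≤ w i) (hw1 : ∑ i, w i = 1)
    (P : ι → Prop) [DecidablePred P] {M : ℝ} (hf : ∀ i, ¬P i → f i ≤ M) :
    ∑ i, w i * f i ≤ M + |M| * ∑ i with P i, w i + ∑ i with P i, w i * f i := by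
  have hcompl : ∑ i with ¬P i, w i = 1 - ∑ i with P i, w i := by
    rw [← hw1, ← sum_filter_add_sum_filter_not univ P w, add_sub_cancel_left]
  have hgood : ∑ i with ¬P i, w i * f i ≤ M * ∑ i with ¬P i, w i := by
    rw [mul_sum]
    refine sum_le_sum fun i hi => ?_
    rw [mul_comm M]
    exact mul_le_mul_of_nonneg_left (hf i (mem_filter.mp hi).2) (hw i)
  rw [hcompl, mul_sub, mul_one] at hgood
  have habs := mul_le_mul_of_nonneg_right (neg_abs_le M)
    (sum_nonneg fun i _ => hw i : 0 ≤ ∑ i with P i, w i)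
  rw [← sum_filter_add_sum_filter_not univ P (fun i => w i * f i)]
  linarith

end WeightedSums

section Information

variable (p : ∀ n, PMF (A n)) (W : ∀ n, S → A n → PMF (B n))

def jointProb (n : ℕ) (s : S) (z : A n × B n) : ℝ := (p n z.1 * W n s z.1 z.2).toReal

lemma jointProb_nonneg (n : ℕ) (s : S) (z : A n × B n) : 0 ≤ jointProb p W n s z :=
  ENNReal.toReal_nonneg

lemma jointProb_eq_mul (n : ℕ) (s : S) (z : A n × B n) :
    jointProb p W n s z = (p n z.1).toReal * (W n s z.1 z.2).toReal :=
  ENNReal.toReal_mul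

lemma sum_jointProb_right [∀ n, Fintype (B n)] (n : ℕ) (s : S) (x : A n) :
    ∑ y, jointProb p W n s (x, y) = (p n x).toReal := by
  simp only [jointProb_eq_mul, ← mul_sum, PMF.sum_toReal_eq_one, mul_one]

variable [∀ n, Fintype (A n)]

lemma toReal_outDist (n : ℕ) (s : S) (y : B n) :
    (outDist p W n s y).toReal = ∑ x, jointProb p W n s (x, y) :=
  ENNReal.toReal_sum fun _ _ => ENNReal.mul_ne_top (PMF.apply_ne_top _ _) (PMF.apply_ne_top _ _)

lemma jointProb_le_toReal_outDist (n : ℕ) (s : S) (z : A n × B n) :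
    jointProb p W n s z ≤ (outDist p W n s z.2).toReal := by
  rw [toReal_outDist]
  exact single_le_sum (f := fun x => jointProb p W n s (x, z.2))
    (fun x _ => jointProb_nonneg p W n s _) (mem_univ z.1)

lemma jointProb_mul_infoDensRate_le (n : ℕ) (s : S) (z : A n × B n) :
    jointProb p W n s z * infoDensRate p W n s z
      ≤ jointProb p W n s z * (1 / (n : ℝ) * -log (p n z.1).toReal) := by
  have h := mul_log_div_le_mul_neg_log ENNReal.toReal_nonneg ENNReal.toReal_nonneg
    ((jointProb_eq_mul p W n s z).symm.trans_le (jointProb_le_toReal_outDist p W n s z))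
  rw [infoDensRate, jointProb_eq_mul]
  have hn : (0 : ℝ) ≤ 1 / n := by positivity
  nlinarith [mul_le_mul_of_nonneg_left h hn]

variable [∀ n, Fintype (B n)]

lemma sum_jointProb (n : ℕ) (s : S) : ∑ z, jointProb p W n s z = 1 := by
  simp only [Fintype.sum_prod_type, sum_jointProb_right, PMF.sum_toReal_eq_one]

lemma sum_toReal_outDist (n : ℕ) (s : S) : ∑ y, (outDist p W n s y).toReal = 1 := by
  simp only [toReal_outDist]
  rw [sum_comm, ← Fintype.sum_prod_type', sum_jointProb]

lemma probEvent_mono {n : ℕ} {s : S} {E F : Set (A n × B n)} (h : E ⊆ F) :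
    probEvent p W n s E ≤ probEvent p W n s F :=
  sum_le_sum fun z _ => Set.indicator_le_indicator_of_subset h (fun _ => zero_le) z

lemma probEvent_le_one (n : ℕ) (s : S) (E : Set (A n × B n)) : probEvent p W n s E ≤ 1 := calc
  probEvent p W n s E ≤ probEvent p W n s Set.univ := probEvent_mono p W (Set.subset_univ E)
  _ = 1 := by
    simp only [probEvent, Set.indicator_univ, Fintype.sum_prod_type, ← mul_sum,
      PMF.sum_coe_eq_one_s15, mul_one]

lemma mem_cinfISet_of_le {R R' : ℝ} (hR' : R' ∈ cinfISet p W) (hRR' : R ≤ R') : R ∈ cinfISet p W :=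
  tendsto_of_tendsto_of_tendsto_of_le_of_le tendsto_const_nhds hR' (fun _ => zero_le)
    fun _ => iSup_mono fun _ => probEvent_mono p W fun _ hz => le_trans hz hRR'

lemma toReal_probEvent (n : ℕ) (s : S) (P : A n × B n → Prop) [DecidablePred P] :
    (probEvent p W n s {z | P z}).toReal = ∑ z with P z, jointProb p W n s z := by
  rw [probEvent, ENNReal.toReal_sum fun z _ => ne_top_of_le_ne_top
      (ENNReal.mul_ne_top (PMF.apply_ne_top _ _) (PMF.apply_ne_top _ _))
      (Set.indicator_le_self _ _ z),
    sum_filter]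
  refine sum_congr rfl fun z _ => ?_
  by_cases h : P z <;> simp [h, jointProb]

lemma one_div_mul_mutualInfo_eq (n : ℕ) (s : S) :
    1 / (n : ℝ) * mutualInfo p W n s
      = ∑ z, jointProb p W n s z * infoDensRate p W n s z := by
  simp only [mutualInfo, infoDensRate, jointProb, Fintype.sum_prod_type, mul_sum]
  exact sum_congr rfl fun x _ => sum_congr rfl fun y _ => by ring

lemma neg_one_div_le_sum_jointProb_mul_min (n : ℕ) (s : S) :
    -(1 / (n : ℝ)) ≤ ∑ z, jointProb p W n s z * min (infoDensRate p W n s z) 0 := by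
  have hn : (0 : ℝ) ≤ 1 / n := by positivity
  have hpt (z : A n × B n) :
      -(1 / (n : ℝ)) * ((p n z.1).toReal * (outDist p W n s z.2).toReal)
        ≤ jointProb p W n s z * min (infoDensRate p W n s z) 0 := by
    have h := neg_le_mul_min_log_div_zero (ENNReal.toReal_nonneg : 0 ≤ (W n s z.1 z.2).toReal)
      (ENNReal.toReal_nonneg : 0 ≤ (outDist p W n s z.2).toReal)
    rw [infoDensRate, jointProb_eq_mul, ← mul_zero (1 / (n : ℝ)), ← mul_min_of_nonneg _ _ hn]
    nlinarith [mul_le_mul_of_nonneg_left h (mul_nonneg hn (ENNReal.toReal_nonneg :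
      0 ≤ (p n z.1).toReal))]
  calc -(1 / (n : ℝ))
      = ∑ z : A n × B n, -(1 / (n : ℝ)) * ((p n z.1).toReal * (outDist p W n s z.2).toReal) := by
        simp only [← mul_sum, Fintype.sum_prod_type, PMF.sum_toReal_eq_one, sum_toReal_outDist,
          mul_one]
    _ ≤ _ := sum_le_sum fun z _ => hpt z

lemma sub_sub_le_one_div_mul_mutualInfo (n : ℕ) (s : S) (R : ℝ) :
    R - |R| * (probEvent p W n s {z | infoDensRate p W n s z ≤ R}).toReal - 1 / n
      ≤ 1 / (n : ℝ) * mutualInfo p W n s := by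
  rw [toReal_probEvent, one_div_mul_mutualInfo_eq]
  linarith [sub_abs_mul_add_sum_mul_min_le (f := infoDensRate p W n s) (jointProb_nonneg p W n s)
      (sum_jointProb p W n s) R,
    neg_one_div_le_sum_jointProb_mul_min p W n s]

lemma neg_one_le_one_div_mul_mutualInfo (n : ℕ) (s : S) :
    -1 ≤ 1 / (n : ℝ) * mutualInfo p W n s := by
  have h := sub_sub_le_one_div_mul_mutualInfo p W n s 0
  have hn : 1 / (n : ℝ) ≤ 1 := by simpa using Nat.cast_inv_le_one (α := ℝ) n
  simp only [abs_zero, zero_mul, sub_zero, zero_sub] at h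
  linarith

lemma bddBelow_range_one_div_mul_mutualInfo (n : ℕ) :
    BddBelow (Set.range fun s : S => 1 / (n : ℝ) * mutualInfo p W n s) :=
  ⟨-1, by rintro _ ⟨s, rfl⟩; exact neg_one_le_one_div_mul_mutualInfo p W n s⟩

lemma cinfI_le_liminf_iInf_one_div_mul_mutualInfo [Nonempty S] (hne : (cinfISet p W).Nonempty)
    (hcobdd : IsCoboundedUnder (· ≥ ·) atTop
      fun n : ℕ => ⨅ s : S, 1 / (n : ℝ) * mutualInfo p W n s) :
    cinfI p W ≤ liminf (fun n : ℕ => ⨅ s : S, 1 / (n : ℝ) * mutualInfo p W n s) atTop := by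
  refine le_of_forall_lt_imp_le_of_dense fun R hR => ?_
  obtain ⟨R', hR', hRR'⟩ := exists_lt_of_lt_csSup hne hR
  set P : ℕ → ℝ≥0∞ := fun n => ⨆ s : S, probEvent p W n s {z | infoDensRate p W n s z ≤ R}
  have hP : Tendsto (fun n => (P n).toReal) atTop (𝓝 0) :=
    (ENNReal.tendsto_toReal ENNReal.zero_ne_top).comp (mem_cinfISet_of_le p W hR' hRR'.le)
  have hlim : Tendsto (fun n : ℕ => R - |R| * (P n).toReal - 1 / (n : ℝ)) atTop (𝓝 R) := by
    simpa using (tendsto_const_nhds.sub (hP.const_mul |R|)).sub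
      tendsto_one_div_atTop_nhds_zero_nat
  have hle (n : ℕ) : R - |R| * (P n).toReal - 1 / (n : ℝ)
      ≤ ⨅ s : S, 1 / (n : ℝ) * mutualInfo p W n s := by
    refine le_ciInf fun s => le_trans ?_ (sub_sub_le_one_div_mul_mutualInfo p W n s R)
    gcongr
    exacts [ne_top_of_le_ne_top ENNReal.one_ne_top (iSup_le fun _ => probEvent_le_one p W n _ _),
      le_iSup (fun s => probEvent p W n s {z | infoDensRate p W n s z ≤ R}) s]
  calc R = liminf (fun n : ℕ => R - |R| * (P n).toReal - 1 / (n : ℝ)) atTop := hlim.liminf_eq.symm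
    _ ≤ _ := liminf_le_liminf (.of_forall hle) hlim.isBoundedUnder_ge hcobdd

end Information

section PerSymbolInputs

variable {𝒳 : Type*} [Fintype 𝒳] [∀ n, Fintype (B n)]
variable (p : ∀ n, PMF (Fin n → 𝒳)) (W : ∀ n, S → (Fin n → 𝒳) → PMF (B n))

lemma sum_filter_jointProb_mul_infoDensRate_le {n : ℕ} (hn : n ≠ 0) (s : S)
    (P : (Fin n → 𝒳) × B n → Prop) [DecidablePred P] :
    ∑ z with P z, jointProb p W n s z * infoDensRate p W n s z
      ≤ (∑ z with P z, jointProb p W n s z) * log (Fintype.card 𝒳) + 1 / n := by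
  set r : (Fin n → 𝒳) → ℝ := fun x => ∑ y with P (x, y), jointProb p W n s (x, y)
  have hr (x) : 0 ≤ r x := sum_nonneg fun y _ => jointProb_nonneg p W n s _
  have hrp (x) : r x ≤ (p n x).toReal := by
    rw [← sum_jointProb_right p W n s x]
    exact sum_le_sum_of_subset_of_nonneg (filter_subset _ _)
      fun y _ _ => jointProb_nonneg p W n s _
  have hregroup (g : (Fin n → 𝒳) → ℝ) :
      ∑ z with P z, jointProb p W n s z * g z.1 = ∑ x, r x * g x := by
    simp only [r, sum_filter, Fintype.sum_prod_type, sum_mul, ite_mul, zero_mul]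
  have hR : ∑ z with P z, jointProb p W n s z = ∑ x, r x := by
    simpa using hregroup 1
  have hR0 : 0 ≤ ∑ x, r x := sum_nonneg fun x _ => hr x
  have hlog : log (Fintype.card (Fin n → 𝒳)) = n * log (Fintype.card 𝒳) := by
    rw [Fintype.card_fun, Fintype.card_fin, Nat.cast_pow, log_pow]
  have hn' : (0 : ℝ) < n := by positivity
  calc ∑ z with P z, jointProb p W n s z * infoDensRate p W n s z
      ≤ ∑ z with P z, jointProb p W n s z * (1 / (n : ℝ) * -log (p n z.1).toReal) :=
        sum_le_sum fun z _ => jointProb_mul_infoDensRate_le p W n s z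
    _ = 1 / n * ∑ x, r x * -log (p n x).toReal := by
        rw [mul_sum, hregroup (fun x => 1 / (n : ℝ) * -log (p n x).toReal)]
        exact sum_congr rfl fun x _ => by ring
    _ ≤ 1 / n * (negMulLog (∑ x, r x) + (∑ x, r x) * log (Fintype.card (Fin n → 𝒳))) := by
        gcongr
        exact sum_mul_neg_log_le hr hrp
    _ = (∑ x, r x) * log (Fintype.card 𝒳) + 1 / n * negMulLog (∑ x, r x) := by
        rw [hlog]; field_simp; ring
    _ ≤ (∑ z with P z, jointProb p W n s z) * log (Fintype.card 𝒳) + 1 / n := by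
        have : 1 / (n : ℝ) * negMulLog (∑ x, r x) ≤ 1 / n * 1 := by
          gcongr
          linarith [negMulLog_le_one_sub_self hR0]
        rw [hR]
        linarith

lemma one_div_mul_mutualInfo_le_log_card_add {n : ℕ} (hn : n ≠ 0) (s : S) :
    1 / (n : ℝ) * mutualInfo p W n s ≤ log (Fintype.card 𝒳) + 1 / n := by
  have h := sum_filter_jointProb_mul_infoDensRate_le p W hn s fun _ => True
  simp only [filter_true, sum_jointProb p W n s, one_mul] at h
  rwa [one_div_mul_mutualInfo_eq]

lemma one_div_mul_mutualInfo_le_add {n : ℕ} (hn : n ≠ 0) (s : S) (c δ : ℝ) :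
    1 / (n : ℝ) * mutualInfo p W n s
      ≤ c + δ + (|c + δ| + log (Fintype.card 𝒳))
          * (probEvent p W n s {z | δ < |infoDensRate p W n s z - c|}).toReal + 1 / n := by
  have hgood (z) (hz : ¬δ < |infoDensRate p W n s z - c|) : infoDensRate p W n s z ≤ c + δ := by
    linarith [le_abs_self (infoDensRate p W n s z - c), not_lt.mp hz]
  rw [toReal_probEvent, one_div_mul_mutualInfo_eq]
  linarith [sum_mul_le_add_abs_mul_add (jointProb_nonneg p W n s) (sum_jointProb p W n s) _ hgood,
    sum_filter_jointProb_mul_infoDensRate_le p W hn s fun z => δ < |infoDensRate p W n s z - c|]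

lemma isBoundedUnder_le_iInf_one_div_mul_mutualInfo [Nonempty S] :
    IsBoundedUnder (· ≤ ·) atTop fun n : ℕ => ⨅ s : S, 1 / (n : ℝ) * mutualInfo p W n s := by
  refine isBoundedUnder_of_eventually_le (a := log (Fintype.card 𝒳) + 1) ?_
  filter_upwards [eventually_ne_atTop 0] with n hn
  have h1n : 1 / (n : ℝ) ≤ 1 := by simpa using Nat.cast_inv_le_one (α := ℝ) n
  refine (ciInf_le (bddBelow_range_one_div_mul_mutualInfo p W n) (Classical.arbitrary S)).trans ?_
  linarith [one_div_mul_mutualInfo_le_log_card_add p W hn (Classical.arbitrary S)]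

lemma liminf_iInf_one_div_mul_mutualInfo_le [Nonempty S] (c : ℝ)
    (hconv : ∀ δ : ℝ, 0 < δ → liminf (fun n => ⨅ s : S,
      probEvent p W n s {z | δ < |infoDensRate p W n s z - c|}) atTop = 0) :
    liminf (fun n : ℕ => ⨅ s : S, 1 / (n : ℝ) * mutualInfo p W n s) atTop ≤ c := by
  refine le_of_forall_pos_le_add fun η hη => ?_
  set δ := η / 3 with hδ
  set K := |c + δ| + log (Fintype.card 𝒳)
  have hK : 0 ≤ K := add_nonneg (abs_nonneg _) (log_natCast_nonneg _)
  have hε : 0 < δ / (K + 1) := by positivity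
  have hfreq : ∃ᶠ n in atTop, ⨅ s : S,
      probEvent p W n s {z | δ < |infoDensRate p W n s z - c|} < ENNReal.ofReal (δ / (K + 1)) :=
    frequently_lt_of_liminf_lt (by isBoundedDefault)
      (by rw [hconv δ (by positivity)]; exact ENNReal.ofReal_pos.mpr hε)
  have hsmall : ∀ᶠ n : ℕ in atTop, n ≠ 0 ∧ 1 / (n : ℝ) ≤ δ :=
    (eventually_ne_atTop 0).and
      (tendsto_one_div_atTop_nhds_zero_nat.eventually (ge_mem_nhds (by positivity)))
  refine liminf_le_of_frequently_le ((hfreq.and_eventually hsmall).mono ?_)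
    (isBoundedUnder_of_eventually_ge (a := -1) (.of_forall fun n =>
      le_ciInf fun s => neg_one_le_one_div_mul_mutualInfo p W n s))
  rintro n ⟨hlt, hn, h1n⟩
  obtain ⟨s, hs⟩ := iInf_lt_iff.mp hlt
  have hKP : K * (probEvent p W n s {z | δ < |infoDensRate p W n s z - c|}).toReal ≤ δ := calc
    _ ≤ (K + 1) * (δ / (K + 1)) := by
      gcongr
      · linarith
      · exact ENNReal.toReal_le_of_le_ofReal hε.le hs.le
    _ = δ := by field_simp
  calc ⨅ s : S, 1 / (n : ℝ) * mutualInfo p W n s ≤ 1 / (n : ℝ) * mutualInfo p W n s :=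
        ciInf_le (bddBelow_range_one_div_mul_mutualInfo p W n) s
    _ ≤ c + δ + K * (probEvent p W n s {z | δ < |infoDensRate p W n s z - c|}).toReal + 1 / n :=
        one_div_mul_mutualInfo_le_add p W hn s c δ
    _ ≤ c + η := by linarith

end PerSymbolInputs

theorem cinf_eq_liminf_iInf_mutualInfo_general {S : Type*} [Nonempty S]
    {𝒳 : Type*} [Fintype 𝒳]
    {B : ℕ → Type*} [∀ n, Fintype (B n)]
    (p : ∀ n : ℕ, PMF (Fin n → 𝒳)) (W : ∀ n : ℕ, S → (Fin n → 𝒳) → PMF (B n))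
    (hfin₁ : (cinfISet p W).Nonempty)
    (hconv : ∀ δ : ℝ, 0 < δ →
      Filter.liminf (fun n => ⨅ s : S,
        probEvent p W n s {z | δ < |infoDensRate p W n s z - cinfI p W|}) atTop = 0) :
    cinfI p W =
      Filter.liminf (fun n : ℕ => ⨅ s : S, (1 / (n : ℝ)) * mutualInfo p W n s) atTop :=
  le_antisymm
    (cinfI_le_liminf_iInf_one_div_mul_mutualInfo p W hfin₁
      (isBoundedUnder_le_iInf_one_div_mul_mutualInfo p W).isCoboundedUnder_ge)
    (liminf_iInf_one_div_mul_mutualInfo_le p W _ hconv)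

/-- if the input alphabets are per-symbol (`A_n = 𝒳ⁿ`), `cinf I(X;Y)` is
finite, and for every `δ > 0` `liminf_n inf_s P(|Z_{n,s} − cinf I(X;Y)| > δ) = 0`, then
`cinf I(X;Y) = liminf_n inf_s (1/n)·I(Xⁿ;Yⁿ|s)`. -/
theorem cinf_eq_liminf_iInf_mutualInfo {S : Type*} [Nonempty S]
    {𝒳 : Type*} [Fintype 𝒳] [Nonempty 𝒳]
    {B : ℕ → Type*} [∀ n, Fintype (B n)] [∀ n, Nonempty (B n)]
    (p : ∀ n : ℕ, PMF (Fin n → 𝒳)) (W : ∀ n : ℕ, S → (Fin n → 𝒳) → PMF (B n))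
    (hfin₁ : (cinfISet p W).Nonempty) (hfin₂ : BddAbove (cinfISet p W))
    (hconv : ∀ δ : ℝ, 0 < δ →
      Filter.liminf (fun n => ⨅ s : S,
        probEvent p W n s {z | δ < |infoDensRate p W n s z - cinfI p W|}) atTop = 0) :
    cinfI p W =
      Filter.liminf (fun n : ℕ => ⨅ s : S, (1 / (n : ℝ)) * mutualInfo p W n s) atTop :=
  cinf_eq_liminf_iInf_mutualInfo_general p W hfin₁ hconv

end
end
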